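/- Let H be a Hilbert space with a unit vector Ω, and let M, N be von Neumann algebras on H. If M ⊆ N′, Ω is cyclic for M, and the set {AΩ + iBΩ : A = A* ∈ M, B = B* ∈ N} is dense in H, then N′ ⊆ M, hence M = N′. -/

import Mathlib

open scoped InnerProductSpace ComplexConjugate

set_option maxHeartbeats 1000000 in
set_option synthInstance.maxHeartbeats 1000000 in
/-- Key geometric lemma: if `U ⊥ V` with dense sum, `x ⊥ V`, `y ⊥ U` then `x ⊥ y`. -/
lemma rvd_ortho_key {E : Type*} [NormedAddCommGroup E] [InnerProductSpace ℝ E]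
    [CompleteSpace E] (U V : Submodule ℝ E) (hUV : U ≤ Vᗮ)
    (hd : (U ⊔ V).topologicalClosure = ⊤)
    {x y : E} (hx : x ∈ Vᗮ) (hy : y ∈ Uᗮ) : ⟪x, y⟫_ℝ = 0 := by
  have hbot : Uᗮ ⊓ Vᗮ = ⊥ := by
    rw [Submodule.inf_orthogonal]
    exact (Submodule.topologicalClosure_eq_top_iff).mp hd
  have hWV : Uᗮᗮ ≤ Vᗮ := by
    calc Uᗮᗮ ≤ Vᗮᗮᗮ := Submodule.orthogonal_le (Submodule.orthogonal_le hUV)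
      _ = Vᗮ := Submodule.triorthogonal_eq_orthogonal
  set p : E := (Submodule.orthogonalProjectionOnto Uᗮᗮ x : E) with hp
  have hpmem : p ∈ Uᗮᗮ := (Submodule.orthogonalProjectionOnto Uᗮᗮ x).2
  have hsub : x - p ∈ Uᗮ ⊓ Vᗮ := by
    constructor
    · have h1 : x - p ∈ Uᗮᗮᗮ := Submodule.sub_starProjection_mem_orthogonal (K := Uᗮᗮ) x
      rwa [Submodule.triorthogonal_eq_orthogonal] at h1
    · exact Submodule.sub_mem _ hx (hWV hpmem)
  rw [hbot, Submodule.mem_bot, sub_eq_zero] at hsub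
  have hxW : x ∈ Uᗮᗮ := hsub ▸ hpmem
  exact (Submodule.mem_orthogonal' Uᗮ x).mp hxW y hy

/-- Rieffel–van Daele duality: let `M, N` be von Neumann algebras on a Hilbert space `H`
with `M ⊆ N′`, and let `Ω` be a unit vector which is cyclic for `M` and such that
`{AΩ + iBΩ : A ∈ M self-adjoint, B ∈ N self-adjoint}` is dense in `H`.
Then `M = N′`. -/
theorem stmt_14 {H : Type*} [NormedAddCommGroup H] [InnerProductSpace ℂ H]
    [CompleteSpace H] (Ω : H) (hΩ : ‖Ω‖ = 1)
    (M N : VonNeumannAlgebra H)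
    (hMN : ∀ a ∈ M, a ∈ N.commutant)
    (hcyc : Dense {v : H | ∃ a ∈ M, a Ω = v})
    (hdense : Dense {v : H | ∃ a ∈ M, ∃ b ∈ N,
        star a = a ∧ star b = b ∧ v = a Ω + Complex.I • b Ω}) :
    ∀ x : H →L[ℂ] H, x ∈ M ↔ x ∈ N.commutant := by
  letI : InnerProductSpace ℝ H := InnerProductSpace.complexToReal
  have hre : ∀ x y : H, ⟪x, y⟫_ℝ = (⟪x, y⟫_ℂ).re := fun _ _ => rfl
  -- expectation values of self-adjoint operators are real
  have hsa_real : ∀ c : H →L[ℂ] H, star c = c → (⟪Ω, c Ω⟫_ℂ).im = 0 := by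
    intro c hc
    have h1 : (starRingEnd ℂ) ⟪Ω, c Ω⟫_ℂ = ⟪Ω, c Ω⟫_ℂ := by
      rw [inner_conj_symm]
      calc ⟪c Ω, Ω⟫_ℂ = ⟪Ω, (ContinuousLinearMap.adjoint c) Ω⟫_ℂ := by
            rw [ContinuousLinearMap.adjoint_inner_right]
        _ = ⟪Ω, c Ω⟫_ℂ := by rw [← ContinuousLinearMap.star_eq_adjoint, hc]
    exact Complex.conj_eq_iff_im.mp h1
  -- key inner product computation
  have key : ∀ T : H →L[ℂ] H, T ∈ N.commutant → star T = T →
      ∀ b ∈ N, star b = b → (⟪T Ω, Complex.I • b Ω⟫_ℂ).re = 0 := by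
    intro T hT hTsa b hb hbsa
    have hcomm : b * T = T * b := (VonNeumannAlgebra.mem_commutant_iff.mp hT) b hb
    have h1 : ⟪T Ω, b Ω⟫_ℂ = ⟪Ω, (T * b) Ω⟫_ℂ := by
      calc ⟪T Ω, b Ω⟫_ℂ = ⟪(ContinuousLinearMap.adjoint T) Ω, b Ω⟫_ℂ := by
            rw [← ContinuousLinearMap.star_eq_adjoint, hTsa]
        _ = ⟪Ω, T (b Ω)⟫_ℂ := by rw [ContinuousLinearMap.adjoint_inner_left]
        _ = ⟪Ω, (T * b) Ω⟫_ℂ := rfl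
    have hsa : star (T * b) = T * b := by
      rw [star_mul, hTsa, hbsa, hcomm]
    have h2 := hsa_real _ hsa
    have h3 : ⟪T Ω, Complex.I • b Ω⟫_ℂ = Complex.I * ⟪Ω, (T * b) Ω⟫_ℂ := by
      rw [inner_smul_right, h1]
    rw [h3, Complex.mul_re, Complex.I_re, Complex.I_im, h2]
    ring
  -- the real subspaces
  set SU : Set H := {v | ∃ a, a ∈ M ∧ star a = a ∧ a Ω = v} with hSU
  set SV : Set H := {v | ∃ b, b ∈ N ∧ star b = b ∧ Complex.I • b Ω = v} with hSV
  set U : Submodule ℝ H := Submodule.span ℝ SU with hU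
  set V : Submodule ℝ H := Submodule.span ℝ SV with hV
  -- membership in Vᗮ from generator orthogonality
  have mem_orth_span : ∀ (S : Set H) (x : H), (∀ s ∈ S, ⟪s, x⟫_ℝ = 0) →
      x ∈ (Submodule.span ℝ S)ᗮ := by
    intro S x hS
    rw [Submodule.mem_orthogonal]
    intro u hu
    induction hu using Submodule.span_induction with
    | mem s hs => exact hS s hs
    | zero => simp
    | add u v _ _ hu hv => rw [inner_add_left, hu, hv]; ring
    | smul r u _ hu => rw [real_inner_smul_left, hu]; ring
  have hTV : ∀ T : H →L[ℂ] H, T ∈ N.commutant → star T = T → T Ω ∈ Vᗮ := by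
    intro T hT hTsa
    apply mem_orth_span
    rintro s ⟨b, hb, hbsa, rfl⟩
    rw [real_inner_comm, hre]
    exact key T hT hTsa b hb hbsa
  have hSU_mem : ∀ S : H →L[ℂ] H, S ∈ M.commutant → star S = S →
      Complex.I • S Ω ∈ Uᗮ := by
    intro S hS hSsa
    apply mem_orth_span
    rintro s ⟨a, ha, hasa, rfl⟩
    rw [hre]
    have hcomm : a * S = S * a := (VonNeumannAlgebra.mem_commutant_iff.mp hS) a ha
    have h1 : ⟪a Ω, S Ω⟫_ℂ = ⟪Ω, (a * S) Ω⟫_ℂ := by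
      calc ⟪a Ω, S Ω⟫_ℂ = ⟪(ContinuousLinearMap.adjoint a) Ω, S Ω⟫_ℂ := by
            rw [← ContinuousLinearMap.star_eq_adjoint, hasa]
        _ = ⟪Ω, a (S Ω)⟫_ℂ := by rw [ContinuousLinearMap.adjoint_inner_left]
        _ = ⟪Ω, (a * S) Ω⟫_ℂ := rfl
    have hsa : star (a * S) = a * S := by
      rw [star_mul, hasa, hSsa, hcomm]
    have h2 := hsa_real _ hsa
    have h3 : ⟪a Ω, Complex.I • S Ω⟫_ℂ = Complex.I * ⟪Ω, (a * S) Ω⟫_ℂ := by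
      rw [inner_smul_right, h1]
    rw [h3, Complex.mul_re, Complex.I_re, Complex.I_im, h2]
    ring
  -- U ⊥ V
  have hUV : U ≤ Vᗮ := by
    rw [hU, Submodule.span_le]
    rintro v ⟨a, ha, hasa, rfl⟩
    exact hTV a (hMN a ha) hasa
  -- density
  have hd : (U ⊔ V).topologicalClosure = ⊤ := by
    have hsub : {v : H | ∃ a ∈ M, ∃ b ∈ N,
        star a = a ∧ star b = b ∧ v = a Ω + Complex.I • b Ω} ⊆ (U ⊔ V : Submodule ℝ H) := by
      rintro v ⟨a, ha, b, hb, hasa, hbsa, rfl⟩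
      exact Submodule.add_mem_sup (Submodule.subset_span ⟨a, ha, hasa, rfl⟩)
        (Submodule.subset_span ⟨b, hb, hbsa, rfl⟩)
    have hdsum : Dense ((U ⊔ V : Submodule ℝ H) : Set H) := hdense.mono hsub
    exact SetLike.coe_injective (by
      rw [Submodule.topologicalClosure_coe, hdsum.closure_eq, Submodule.top_coe])
  -- the crucial reality statement
  have hreal : ∀ T : H →L[ℂ] H, T ∈ N.commutant → star T = T →
      ∀ S : H →L[ℂ] H, S ∈ M.commutant → star S = S → (⟪T Ω, S Ω⟫_ℂ).im = 0 := by
    intro T hT hTsa S hS hSsa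
    have h := rvd_ortho_key U V hUV hd (hTV T hT hTsa) (hSU_mem S hS hSsa)
    rw [hre, inner_smul_right] at h
    simpa [Complex.mul_re] using h
  -- the vector state
  set ω : (H →L[ℂ] H) →ₗ[ℂ] ℂ :=
    { toFun := fun X => ⟪Ω, X Ω⟫_ℂ
      map_add' := fun X Y => by simp [inner_add_right]
      map_smul' := fun c X => by simp [inner_smul_right] } with hω
  have hω_apply : ∀ X : H →L[ℂ] H, ω X = ⟪Ω, X Ω⟫_ℂ := fun _ => rfl
  -- ω(TS) = ω(ST) for self-adjoint T ∈ N', S ∈ M'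
  have hcomm_sa : ∀ T : H →L[ℂ] H, T ∈ N.commutant → star T = T →
      ∀ S : H →L[ℂ] H, S ∈ M.commutant → star S = S → ω (T * S) = ω (S * T) := by
    intro T hT hTsa S hS hSsa
    have h1 : ω (T * S) = ⟪T Ω, S Ω⟫_ℂ := by
      rw [hω_apply]
      calc ⟪Ω, (T * S) Ω⟫_ℂ = ⟪Ω, T (S Ω)⟫_ℂ := rfl
        _ = ⟪(ContinuousLinearMap.adjoint T) Ω, S Ω⟫_ℂ := by
            rw [ContinuousLinearMap.adjoint_inner_left]
        _ = ⟪T Ω, S Ω⟫_ℂ := by rw [← ContinuousLinearMap.star_eq_adjoint, hTsa]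
    have h2 : ω (S * T) = ⟪S Ω, T Ω⟫_ℂ := by
      rw [hω_apply]
      calc ⟪Ω, (S * T) Ω⟫_ℂ = ⟪Ω, S (T Ω)⟫_ℂ := rfl
        _ = ⟪(ContinuousLinearMap.adjoint S) Ω, T Ω⟫_ℂ := by
            rw [ContinuousLinearMap.adjoint_inner_left]
        _ = ⟪S Ω, T Ω⟫_ℂ := by rw [← ContinuousLinearMap.star_eq_adjoint, hSsa]
    have h3 : (starRingEnd ℂ) ⟪T Ω, S Ω⟫_ℂ = ⟪T Ω, S Ω⟫_ℂ :=
      Complex.conj_eq_iff_im.mpr (hreal T hT hTsa S hS hSsa)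
    rw [h1, h2, ← h3, inner_conj_symm]
  -- self-adjoint decomposition inside a von Neumann algebra
  have hdecomp : ∀ (W : VonNeumannAlgebra H) (T : H →L[ℂ] H), T ∈ W →
      ∃ T₁ T₂ : H →L[ℂ] H, T₁ ∈ W ∧ T₂ ∈ W ∧ star T₁ = T₁ ∧ star T₂ = T₂ ∧
        T = T₁ + Complex.I • T₂ := by
    intro W T hT
    refine ⟨(2 : ℂ)⁻¹ • (T + star T), (2 * Complex.I)⁻¹ • (T - star T), ?_, ?_, ?_, ?_, ?_⟩
    · show _ ∈ W.toStarSubalgebra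
      exact SMulMemClass.smul_mem _ (add_mem hT (star_mem hT))
    · show _ ∈ W.toStarSubalgebra
      exact SMulMemClass.smul_mem _ (sub_mem hT (star_mem hT))
    · have hc : star ((2 : ℂ)⁻¹) = (2 : ℂ)⁻¹ := by simp
      rw [star_smul, star_add, star_star, hc, add_comm]
    · have hc : star ((2 * Complex.I)⁻¹ : ℂ) = -(2 * Complex.I)⁻¹ := by
        simp [mul_inv, Complex.inv_I]
      rw [star_smul, star_sub, star_star, hc, neg_smul, ← smul_neg, neg_sub]
    · rw [smul_smul]
      have hc : Complex.I * (2 * Complex.I)⁻¹ = (2 : ℂ)⁻¹ := by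
        rw [mul_inv, Complex.inv_I]
        ring_nf
        rw [Complex.I_sq]
        ring
      rw [hc, ← smul_add]
      have e : (T + star T) + (T - star T) = (2 : ℂ) • T := by
        rw [two_smul]; abel
      rw [e, smul_smul]
      norm_num
  -- ω(TS) = ω(ST) for all T ∈ N', S ∈ M'
  have hcomm : ∀ T : H →L[ℂ] H, T ∈ N.commutant →
      ∀ S : H →L[ℂ] H, S ∈ M.commutant → ω (T * S) = ω (S * T) := by
    intro T hT S hS
    obtain ⟨T₁, T₂, hT₁, hT₂, hT₁sa, hT₂sa, rfl⟩ := hdecomp N.commutant T hT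
    obtain ⟨S₁, S₂, hS₁, hS₂, hS₁sa, hS₂sa, rfl⟩ := hdecomp M.commutant S hS
    simp only [add_mul, mul_add, smul_mul_assoc, mul_smul_comm, map_add, map_smul, smul_smul,
      smul_eq_mul]
    rw [hcomm_sa T₁ hT₁ hT₁sa S₁ hS₁ hS₁sa, hcomm_sa T₁ hT₁ hT₁sa S₂ hS₂ hS₂sa,
      hcomm_sa T₂ hT₂ hT₂sa S₁ hS₁ hS₁sa, hcomm_sa T₂ hT₂ hT₂sa S₂ hS₂ hS₂sa]
    ring
  -- final commutation
  have hfinal : ∀ T : H →L[ℂ] H, T ∈ N.commutant →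
      ∀ S : H →L[ℂ] H, S ∈ M.commutant → S * T = T * S := by
    intro T hT S hS
    have hstep : ∀ A₁ ∈ M, ∀ C ∈ M,
        ⟪C Ω, (S * T) (A₁ Ω)⟫_ℂ = ⟪C Ω, (T * S) (A₁ Ω)⟫_ℂ := by
      intro A₁ hA₁ C hC
      have hC' : star C ∈ N.commutant := hMN _ (star_mem hC)
      have hA₁' : A₁ ∈ N.commutant := hMN _ hA₁
      have hT' : star C * T * A₁ ∈ N.commutant :=
        mul_mem (mul_mem hC' hT) hA₁'
      have h := hcomm _ hT' S hS
      have e1 : star C * T * A₁ * S = star C * (T * S) * A₁ := by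
        have : A₁ * S = S * A₁ := (VonNeumannAlgebra.mem_commutant_iff.mp hS) A₁ hA₁
        rw [mul_assoc, this, ← mul_assoc, ← mul_assoc, mul_assoc (star C) T S]
      have e2 : S * (star C * T * A₁) = star C * (S * T) * A₁ := by
        have : star C * S = S * star C :=
          (VonNeumannAlgebra.mem_commutant_iff.mp hS) (star C) (star_mem hC)
        rw [← mul_assoc, ← mul_assoc, ← this, mul_assoc (star C) S T]
      rw [e1, e2] at h
      have key : ∀ X : H →L[ℂ] H, ω (star C * X * A₁) = ⟪C Ω, X (A₁ Ω)⟫_ℂ := by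
        intro X
        rw [hω_apply]
        calc ⟪Ω, (star C * X * A₁) Ω⟫_ℂ = ⟪Ω, (star C) (X (A₁ Ω))⟫_ℂ := rfl
          _ = ⟪Ω, (ContinuousLinearMap.adjoint C) (X (A₁ Ω))⟫_ℂ := by
              rw [← ContinuousLinearMap.star_eq_adjoint]
          _ = ⟪C Ω, X (A₁ Ω)⟫_ℂ := by rw [ContinuousLinearMap.adjoint_inner_right]
      rw [key, key] at h
      exact h.symm
    have hvec : ∀ A₁ ∈ M, (S * T) (A₁ Ω) = (T * S) (A₁ Ω) := by
      intro A₁ hA₁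
      set w : H := (S * T) (A₁ Ω) - (T * S) (A₁ Ω) with hw
      have hall : ∀ v : H, ⟪v, w⟫_ℂ = 0 := by
        have hclosed : IsClosed {v : H | ⟪v, w⟫_ℂ = 0} :=
          isClosed_eq (Continuous.inner continuous_id continuous_const) continuous_const
        have hsub : {v : H | ∃ a ∈ M, a Ω = v} ⊆ {v : H | ⟪v, w⟫_ℂ = 0} := by
          rintro v ⟨a, ha, rfl⟩
          simp only [Set.mem_setOf_eq, hw, inner_sub_right]
          rw [hstep A₁ hA₁ a ha]
          ring
        have := closure_minimal hsub hclosed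
        rw [hcyc.closure_eq] at this
        intro v
        exact this (Set.mem_univ v)
      have : w = 0 := by
        have := hall w
        rwa [inner_self_eq_zero] at this
      rw [hw, sub_eq_zero] at this
      exact this
    ext v
    show (S * T) v = (T * S) v
    have hclosed : IsClosed {v : H | (S * T) v = (T * S) v} :=
      isClosed_eq (S * T).continuous (T * S).continuous
    have hsub : {v : H | ∃ a ∈ M, a Ω = v} ⊆ {v : H | (S * T) v = (T * S) v} := by
      rintro v ⟨a, ha, rfl⟩
      exact hvec a ha
    have := closure_minimal hsub hclosed
    rw [hcyc.closure_eq] at this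
    exact this (Set.mem_univ v)
  intro x
  constructor
  · exact hMN x
  · intro hx
    rw [← VonNeumannAlgebra.commutant_commutant M, VonNeumannAlgebra.mem_commutant_iff]
    intro g hg
    exact hfinal x hx g hg
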